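/- arXiv:1808.04221 — 4 statements merged into one kernel-verified Lean document; each statement's English description precedes it below -/
import Mathlib

section
/- For every partition μ, the staircase rank of μ equals the number of salient rows of μ. -/
/-- `μ : ℕ → ℕ` represents a partition via its parts `μ 1 ≥ μ 2 ≥ ⋯`; the index `0` is
unused and required to be `0`.  The parts are weakly decreasing and only finitely many
are nonzero. -/
def IsPartition (μ : ℕ → ℕ) : Prop :=
  μ 0 = 0 ∧ (∀ i, 1 ≤ i → μ (i + 1) ≤ μ i) ∧ {i | μ i ≠ 0}.Finite

/-- The weight `|μ|` of a partition: the sum of its parts. -/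
noncomputable def pweight (μ : ℕ → ℕ) : ℕ := ∑ᶠ i, μ i

/-- The length `ℓ(μ)`: the number of nonzero parts. -/
noncomputable def plength (μ : ℕ → ℕ) : ℕ := Set.ncard {i | 1 ≤ i ∧ μ i ≠ 0}

/-- A partition is strict if its nonzero parts are pairwise distinct. -/
def IsStrict (μ : ℕ → ℕ) : Prop := ∀ i j, 1 ≤ i → i < j → μ j ≠ 0 → μ j < μ i

/-- `(i, j)` is a cell of the Ferrers board of `μ`. -/
def Cell (μ : ℕ → ℕ) (i j : ℕ) : Prop := 1 ≤ i ∧ 1 ≤ j ∧ j ≤ μ i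

/-- The Ferrers board of `μ` as a set of cells. -/
def Board (μ : ℕ → ℕ) : Set (ℕ × ℕ) := {p | Cell μ p.1 p.2}

/-- The number of ways to place `k` non-attacking rooks on the Ferrers board of `μ`,
i.e. the number of `k`-element subsets of the board whose cells have pairwise distinct
row indices and pairwise distinct column indices. -/
noncomputable def rookCount (μ : ℕ → ℕ) (k : ℕ) : ℕ :=
  Set.ncard {s : Finset (ℕ × ℕ) | s.card = k ∧ (∀ p ∈ s, Cell μ p.1 p.2) ∧
    ∀ p ∈ s, ∀ q ∈ s, p ≠ q → p.1 ≠ q.1 ∧ p.2 ≠ q.2}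

/-- Rook equivalence of partitions. -/
def RookEquiv (μ ν : ℕ → ℕ) : Prop := ∀ k, rookCount μ k = rookCount ν k

/-- `α` contains `μ` as a pattern: there are strictly increasing functions `f, g` on the
positive integers such that `(i, j)` is a cell of `μ` iff `(f i, g j)` is a cell of `α`. -/
def Contains (α μ : ℕ → ℕ) : Prop :=
  ∃ f g : ℕ → ℕ,
    (∀ i, 1 ≤ i → 1 ≤ f i) ∧ (∀ j, 1 ≤ j → 1 ≤ g j) ∧
    (∀ i j, 1 ≤ i → i < j → f i < f j) ∧
    (∀ i j, 1 ≤ i → i < j → g i < g j) ∧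
    (∀ i j, 1 ≤ i → 1 ≤ j → (Cell μ i j ↔ Cell α (f i) (g j)))

/-- `P_n(μ)`: the set of partitions of `n` containing `μ`. -/
def PnSet (n : ℕ) (μ : ℕ → ℕ) : Set (ℕ → ℕ) :=
  {α | IsPartition α ∧ pweight α = n ∧ Contains α μ}

/-- `P_n(μ, k)`: the members of `P_n(μ)` whose first part is `k + μ 1`. -/
def PnSetK (n : ℕ) (μ : ℕ → ℕ) (k : ℕ) : Set (ℕ → ℕ) :=
  {α | α ∈ PnSet n μ ∧ α 1 = k + μ 1}

/-- Wilf equivalence of partitions. -/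
def WilfEquiv (μ ν : ℕ → ℕ) : Prop :=
  ∀ n, 1 ≤ n → (PnSet n μ).ncard = (PnSet n ν).ncard

/-- The multiplicity of `v` among the parts `μ 1, μ 2, …` of `μ`. -/
noncomputable def partCount (μ : ℕ → ℕ) (v : ℕ) : ℕ := Set.ncard {i | 1 ≤ i ∧ μ i = v}

/-- `γ` is the extension of `ν` by the pair `(α, β)`: `γ` is a partition whose multiset of
nonzero parts is the multiset union of the nonzero parts of `ν + α` and those of `β`. -/
def IsExtension (ν α β γ : ℕ → ℕ) : Prop :=
  IsPartition γ ∧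
  ∀ v, 1 ≤ v → partCount γ v = partCount (fun i => ν i + α i) v + partCount β v

/-- `ν` is the `(i, j)`-transform of `μ`: the board of `ν` is obtained from the board of
`μ` by replacing the subboard of cells weakly southeast of `(i, j)` by its conjugate. -/
def IsTransform (i j : ℕ) (μ ν : ℕ → ℕ) : Prop :=
  IsPartition μ ∧ IsPartition ν ∧ 1 ≤ i ∧ 1 ≤ j ∧
  Board ν = (Board μ \ {p ∈ Board μ | i ≤ p.1 ∧ j ≤ p.2}) ∪
    (fun p : ℕ × ℕ => (i + (p.2 - j), j + (p.1 - i))) '' {p ∈ Board μ | i ≤ p.1 ∧ j ≤ p.2}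

/-- One step: `ν` is an `(i, 1)`-transform of `μ` for some `i`. -/
def TransformRel1 (μ ν : ℕ → ℕ) : Prop := ∃ i, IsTransform i 1 μ ν

/-- `(i, 1)`-equivalence: a finite (possibly empty) sequence of `(i, 1)`-transformations. -/
def TransformEquiv1 : (ℕ → ℕ) → (ℕ → ℕ) → Prop := Relation.ReflTransGen TransformRel1

/-- One step: `ν` is an `(i, j)`-transform of `μ` for some `i, j`. -/
def TransformRel (μ ν : ℕ → ℕ) : Prop := ∃ i j, IsTransform i j μ ν

/-- Differing by a finite sequence of `(i, j)`-transformations. -/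
def TransformEquiv : (ℕ → ℕ) → (ℕ → ℕ) → Prop := Relation.ReflTransGen TransformRel

/-- Row `i` of `μ` is salient if `i + μ i ≥ j + μ j` for some `j > i`. -/
def Salient (μ : ℕ → ℕ) (i : ℕ) : Prop := ∃ j, i < j ∧ j + μ j ≤ i + μ i

/-- The multiplicity of `v` in the multiset `S_μ = {i + μ i : row i of μ is salient}`. -/
noncomputable def salientCount (μ : ℕ → ℕ) (v : ℕ) : ℕ :=
  Set.ncard {i | 1 ≤ i ∧ Salient μ i ∧ i + μ i = v}

/-- The staircase rank of `μ`: the largest `k` with `μ i ≥ k - i + 1` for `1 ≤ i ≤ k`. -/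
noncomputable def staircaseRank (μ : ℕ → ℕ) : ℕ :=
  sSup {k | ∀ i, 1 ≤ i → i ≤ k → k + 1 ≤ μ i + i}

/-- The number of cells of the L in `μ` with corner `p = (i, j)`: the cells `(i, x)` of `μ`
with `x ≥ j` together with the cells `(y, j)` with `1 ≤ y ≤ i`. -/
def LWeight (μ : ℕ → ℕ) (p : ℕ × ℕ) : ℕ := (μ p.1 - p.2) + p.1

/-- `c` lists the corners of a nested sequence of `k` L's in `μ`: each corner is a cell of
`μ`, and later corners are strictly above and strictly to the right of earlier ones. -/
def IsNested (μ : ℕ → ℕ) {k : ℕ} (c : Fin k → ℕ × ℕ) : Prop :=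
  (∀ a, Cell μ (c a).1 (c a).2) ∧
  ∀ a b : Fin k, a < b → (c b).1 < (c a).1 ∧ (c a).2 < (c b).2

/-- `w_k(μ)`: the maximum weight of a sequence of `k` nested L's in `μ`
(`0` if there is no such sequence). -/
noncomputable def nestedLMax (μ : ℕ → ℕ) (k : ℕ) : ℕ :=
  sSup {w | ∃ c : Fin k → ℕ × ℕ, IsNested μ c ∧ ∑ a, LWeight μ (c a) = w}

/-!
Write `f i = i + μ i`. The staircase rank is `min_{i ≥ 1} f i - 1`. On the non-salient rows `f` is
strictly increasing, and since the parts decrease, `f` rises by at most one per step, so the last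
row with `f ≤ v` is non-salient with `f = v`: thus `f` maps the non-salient rows onto the values
`≥ min f`. Beyond the last nonzero part every row `N` is non-salient with `f N = N`, so exactly
`N + 1 - min f` of the rows `1, …, N` are non-salient, and the others are all the salient rows.
-/

theorem not_salient_iff {μ : ℕ → ℕ} {i : ℕ} :
    ¬ Salient μ i ↔ ∀ j, i < j → i + μ i < j + μ j := by
  simp [Salient]

theorem strictMonoOn_add_not_salient (μ : ℕ → ℕ) :
    StrictMonoOn (fun i => i + μ i) {i | ¬ Salient μ i} :=
  fun _ ha _ _ hab => not_salient_iff.1 ha _ hab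

theorem not_salient_of_forall_eq_zero {μ : ℕ → ℕ} {i : ℕ} (h : ∀ j, i ≤ j → μ j = 0) :
    ¬ Salient μ i :=
  not_salient_iff.2 fun j hij => by simp [h i le_rfl, h j hij.le, hij]

theorem staircaseRank_eq_of_isLeast {μ : ℕ → ℕ} {m : ℕ}
    (hm : IsLeast ((fun i => i + μ i) '' Set.Ici 1) m) : staircaseRank μ = m - 1 := by
  obtain ⟨⟨i₀, hi₀ : 1 ≤ i₀, hm₀⟩, hle⟩ := hm
  simp only at hm₀
  refine IsGreatest.csSup_eq ⟨fun i hi _ => ?_, fun k hk => ?_⟩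
  · have : m ≤ i + μ i := hle ⟨i, hi, rfl⟩
    omega
  · by_cases h : i₀ ≤ k
    · have := hk i₀ hi₀ h
      omega
    · omega

namespace IsPartition

variable {μ : ℕ → ℕ}

theorem exists_forall_eq_zero (hμ : IsPartition μ) : ∃ N, 1 ≤ N ∧ ∀ j, N ≤ j → μ j = 0 := by
  obtain ⟨L, hL⟩ := hμ.2.2.bddAbove
  exact ⟨L + 1, by omega, fun j hj => by_contra fun h => by have := hL h; omega⟩

theorem succ_add_le (hμ : IsPartition μ) {i : ℕ} (hi : 1 ≤ i) :
    i + 1 + μ (i + 1) ≤ i + μ i + 1 := by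
  have := hμ.2.1 i hi
  omega

theorem exists_not_salient_add_eq (hμ : IsPartition μ) {i v : ℕ} (hi : 1 ≤ i)
    (hv : i + μ i ≤ v) : ∃ k, i ≤ k ∧ ¬ Salient μ k ∧ k + μ k = v := by
  classical
  set k := Nat.findGreatest (fun j => j + μ j ≤ v) v
  have hik : i ≤ k := Nat.le_findGreatest (by omega) hv
  have hk : k + μ k ≤ v := Nat.findGreatest_spec (P := fun j => j + μ j ≤ v) (by omega) hv
  have hafter : ∀ j, k < j → v < j + μ j := fun j hkj => by
    by_cases hjv : j ≤ v
    · exact not_le.1 (Nat.findGreatest_is_greatest (P := fun j => j + μ j ≤ v) hkj hjv)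
    · omega
  have hkv : k + μ k = v := by
    have := hafter (k + 1) (by omega)
    have := hμ.succ_add_le (i := k) (by omega)
    omega
  exact ⟨k, hik, not_salient_iff.2 fun j hkj => hkv ▸ hafter j hkj, hkv⟩

theorem card_filter_not_salient [DecidablePred (Salient μ)] (hμ : IsPartition μ) {m N : ℕ}
    (hm : IsLeast ((fun i => i + μ i) '' Set.Ici 1) m) (hNs : ¬ Salient μ N) :
    ((Finset.Icc 1 N).filter (fun i => ¬ Salient μ i)).card = N + μ N + 1 - m := by
  rw [← Nat.card_Icc]
  refine Finset.card_nbij (fun i => i + μ i) (fun i hi => ?_) (fun a ha b hb hab => ?_)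
    (fun v hv => ?_)
  · simp only [Finset.coe_filter, Finset.mem_Icc, Set.mem_ofPred_eq] at hi
    obtain ⟨⟨hi1, hiN⟩, his⟩ := hi
    simp only [Finset.coe_Icc, Set.mem_Icc]
    refine ⟨hm.2 ⟨i, hi1, rfl⟩, ?_⟩
    rcases hiN.lt_or_eq with hlt | rfl
    · exact (not_salient_iff.1 his N hlt).le
    · exact le_rfl
  · simp only [Finset.coe_filter, Set.mem_ofPred_eq] at ha hb
    exact (strictMonoOn_add_not_salient μ).injOn ha.2 hb.2 hab
  · simp only [Finset.coe_Icc, Set.mem_Icc] at hv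
    obtain ⟨i₀, hi₀ : 1 ≤ i₀, hi₀m⟩ := hm.1
    simp only at hi₀m
    obtain ⟨k, hik, hks, hkv⟩ := hμ.exists_not_salient_add_eq (v := v) hi₀ (by omega)
    have hkN : k ≤ N := by
      by_contra! hNk
      have := not_salient_iff.1 hNs k hNk
      omega
    exact ⟨k, by simpa using ⟨⟨hi₀.trans hik, hkN⟩, hks⟩, hkv⟩

end IsPartition

theorem staircase_rank_eq_card_salient (μ : ℕ → ℕ) (hμ : IsPartition μ) :
    staircaseRank μ = Set.ncard {i | 1 ≤ i ∧ Salient μ i} := by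
  classical
  obtain ⟨m, hm⟩ : ∃ m, IsLeast ((fun i => i + μ i) '' Set.Ici 1) m :=
    ⟨_, isLeast_csInf (Set.nonempty_Ici.image _)⟩
  obtain ⟨N, hN, hN0⟩ := hμ.exists_forall_eq_zero
  have hNs : ¬ Salient μ N := not_salient_of_forall_eq_zero hN0
  have hsalient : {i | 1 ≤ i ∧ Salient μ i} = ↑((Finset.Icc 1 N).filter (Salient μ)) := by
    ext i
    simp only [Set.mem_ofPred_eq, Finset.coe_filter, Finset.mem_Icc]
    refine ⟨fun ⟨hi, hs⟩ => ⟨⟨hi, ?_⟩, hs⟩, fun ⟨⟨hi, _⟩, hs⟩ => ⟨hi, hs⟩⟩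
    by_contra! hNi
    exact not_salient_of_forall_eq_zero (fun j hj => hN0 j (by omega)) hs
  have hmN : m ≤ N := by simpa [hN0 N le_rfl] using hm.2 ⟨N, hN, rfl⟩
  have hsplit := Finset.card_filter_add_card_filter_not (s := Finset.Icc 1 N) (Salient μ)
  rw [hμ.card_filter_not_salient hm hNs, hN0 N le_rfl, Nat.card_Icc] at hsplit
  rw [staircaseRank_eq_of_isLeast hm, hsalient, Set.ncard_coe_finset]
  omega
end

section
/- Let μ be a partition and let i be a salient row of μ such that exactly k salient rows of μ have index ≥ i (i.e., row i is the k-th salient row from the bottom). Then μ_i ≥ k. -/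
/-!
Write `S m` for the number of salient rows with index at least `m`; we show `S m ≤ μ m` for
every row `m` by downward induction on `m`. A non-salient row does not contribute, so
`S m = S (m + 1) ≤ μ (m + 1) ≤ μ m`. If row `m` is salient, with `j > m` and
`j + μ j ≤ m + μ m`, then at most `j - m` salient rows lie in `[m, j)`, hence
`S m ≤ (j - m) + S j ≤ (j - m) + μ j ≤ μ m`.
-/

def salientFrom (μ : ℕ → ℕ) (m : ℕ) : Set ℕ := {j | m ≤ j ∧ Salient μ j}

theorem ncard_setOf_le_and_le_sub_add (P : ℕ → Prop) (m j : ℕ)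
    (hfin : {x | j ≤ x ∧ P x}.Finite) :
    {x | m ≤ x ∧ P x}.ncard ≤ j - m + {x | j ≤ x ∧ P x}.ncard := by
  calc {x | m ≤ x ∧ P x}.ncard ≤ (Set.Ico m j ∪ {x | j ≤ x ∧ P x}).ncard :=
        Set.ncard_le_ncard (fun x ⟨hmx, hx⟩ => by
          by_cases hjx : j ≤ x
          · exact Or.inr ⟨hjx, hx⟩
          · exact Or.inl ⟨hmx, not_le.mp hjx⟩) ((Set.finite_Ico m j).union hfin)
    _ ≤ j - m + {x | j ≤ x ∧ P x}.ncard := by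
        rw [← Set.ncard_Ico_nat m j]; exact Set.ncard_union_le _ _

variable {μ : ℕ → ℕ}

theorem Salient.apply_pos {j : ℕ} (h : Salient μ j) : 0 < μ j := by
  obtain ⟨m, hjm, hm⟩ := h
  omega

namespace IsPartition

theorem antitoneOn (hμ : IsPartition μ) : AntitoneOn μ (Set.Ici 1) :=
  antitoneOn_nat_Ici_of_succ_le hμ.2.1

theorem exists_salientFrom_eq_empty (hμ : IsPartition μ) :
    ∃ n, ∀ m > n, salientFrom μ m = ∅ := by
  obtain ⟨n, hn⟩ := hμ.2.2.bddAbove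
  refine ⟨n, fun m hnm => Set.eq_empty_of_forall_notMem fun j ⟨hmj, hj⟩ => ?_⟩
  have := hn hj.apply_pos.ne'
  omega

theorem finite_salientFrom (hμ : IsPartition μ) (m : ℕ) : (salientFrom μ m).Finite :=
  hμ.2.2.subset fun _ hj => hj.2.apply_pos.ne'

theorem ncard_salientFrom_le (hμ : IsPartition μ) {m : ℕ} (hm : 1 ≤ m) :
    (salientFrom μ m).ncard ≤ μ m := by
  induction m using Nat.strong_decreasing_induction with
  | base =>
    obtain ⟨n, hn⟩ := hμ.exists_salientFrom_eq_empty
    exact ⟨n, fun m hnm _ => by simp [hn m hnm]⟩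
  | step m ih =>
    by_cases hsal : Salient μ m
    · obtain ⟨j, hmj, hj⟩ := hsal
      calc (salientFrom μ m).ncard ≤ j - m + (salientFrom μ j).ncard :=
            ncard_setOf_le_and_le_sub_add _ m j (hμ.finite_salientFrom j)
        _ ≤ j - m + μ j := by gcongr; exact ih j hmj (by omega)
        _ ≤ μ m := by omega
    · have hsub : salientFrom μ m ⊆ salientFrom μ (m + 1) := fun x ⟨hmx, hx⟩ =>
        ⟨Nat.succ_le_of_lt (lt_of_le_of_ne hmx (by rintro rfl; exact hsal hx)), hx⟩
      calc (salientFrom μ m).ncard ≤ (salientFrom μ (m + 1)).ncard :=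
            Set.ncard_le_ncard hsub (hμ.finite_salientFrom _)
        _ ≤ μ (m + 1) := ih (m + 1) (by omega) (by omega)
        _ ≤ μ m := hμ.antitoneOn (Set.mem_Ici.mpr hm) (Set.mem_Ici.mpr (by omega)) (by omega)

end IsPartition

theorem salient_row_length_general (μ : ℕ → ℕ) (hμ : IsPartition μ)
    (i k : ℕ) (hi : 1 ≤ i)
    (hk : Set.ncard {j | i ≤ j ∧ Salient μ j} = k) :
    k ≤ μ i :=
  hk ▸ hμ.ncard_salientFrom_le hi

theorem salient_row_length (μ : ℕ → ℕ) (hμ : IsPartition μ)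
    (i k : ℕ) (hi : 1 ≤ i) (hs : Salient μ i)
    (hk : Set.ncard {j | i ≤ j ∧ Salient μ j} = k) :
    k ≤ μ i :=
  salient_row_length_general μ hμ i k hi hk
end

section
/- Let μ be a partition and let L₁, …, L_k be a sequence of k nested L's in μ whose weight equals w_k(μ). Then for each 1 ≤ c ≤ k, the corner of L_c lies in a salient row of μ. -/
/-!
Write the weight of an L with corner `(r, j)` as `(r + μ r) - j`. If the corner `c a` lies in a
row `i` that is not salient, then `r + μ r > i + μ i` for every `r > i`. Let `t` be the first row
below `i` that carries no corner and move the corners in rows `i, …, t - 1` down by one row. The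
inequality above shows they are still cells, nesting is preserved because row `t` was free, the
columns do not change, and the weight grows by the telescoping sum `(t + μ t) - (i + μ i) > 0`,
contradicting maximality.
-/

lemma exists_first_gap_after (S : Finset ℕ) {i : ℕ} (hi : i ∈ S) :
    ∃ t, i < t ∧ t ∉ S ∧ ∀ s, i ≤ s → s < t → s ∈ S := by
  classical
  have hex : ∃ t, i < t ∧ t ∉ S :=
    ⟨S.sup id + 1, Nat.lt_succ_of_le (S.le_sup (f := id) hi),
      fun h => (S.sup id).lt_irrefl (S.le_sup (f := id) h)⟩
  refine ⟨Nat.find hex, (Nat.find_spec hex).1, (Nat.find_spec hex).2, fun s his hst => ?_⟩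
  rcases his.eq_or_lt with rfl | his
  · exact hi
  · by_contra hs
    exact Nat.find_min hex hst ⟨his, hs⟩

def rowShift (i t r : ℕ) : ℕ := if i ≤ r ∧ r < t then r + 1 else r

lemma rowShift_lt_rowShift {i t r r' : ℕ} (h : r < r') (hr' : r' ≠ t) :
    rowShift i t r < rowShift i t r' := by
  unfold rowShift
  split_ifs <;> omega

lemma sum_rowShift_sub {S : Finset ℕ} {i t : ℕ} (hit : i ≤ t) (hS : Finset.Ico i t ⊆ S)
    (g : ℕ → ℤ) : ∑ r ∈ S, (g (rowShift i t r) - g r) = g t - g i := by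
  rw [← Finset.sum_subset hS, ← Finset.sum_Ico_sub g hit]
  · refine Finset.sum_congr rfl fun r hr => ?_
    rw [Finset.mem_Ico] at hr
    simp [rowShift, hr]
  · intro r _ hr
    rw [Finset.mem_Ico] at hr
    simp [rowShift, hr]

lemma LWeight_eq_of_cell {μ : ℕ → ℕ} {p : ℕ × ℕ} (h : Cell μ p.1 p.2) :
    (LWeight μ p : ℤ) = μ p.1 + p.1 - p.2 := by
  obtain ⟨-, -, h⟩ := h
  unfold LWeight
  omega

lemma nestedLMax_bddAbove {μ : ℕ → ℕ} (hμ : IsPartition μ) (k : ℕ) :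
    BddAbove {w | ∃ c : Fin k → ℕ × ℕ, IsNested μ c ∧ ∑ a, LWeight μ (c a) = w} := by
  obtain ⟨N, hN⟩ := hμ.2.2.bddAbove
  have hμN : ∀ x, μ x ≤ (Finset.range (N + 1)).sup μ := by
    intro x
    by_cases hx : μ x = 0
    · simp [hx]
    · exact Finset.le_sup (Finset.mem_range.mpr (Nat.lt_succ_of_le (hN hx)))
  refine ⟨k * ((Finset.range (N + 1)).sup μ + N), ?_⟩
  rintro w ⟨c, hc, rfl⟩
  calc ∑ b, LWeight μ (c b) ≤ ∑ _b : Fin k, ((Finset.range (N + 1)).sup μ + N) := by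
        refine Finset.sum_le_sum fun b _ => ?_
        obtain ⟨-, h1, h2⟩ := hc.1 b
        have := hN (show μ (c b).1 ≠ 0 by omega)
        have := hμN (c b).1
        unfold LWeight
        omega
    _ = k * ((Finset.range (N + 1)).sup μ + N) := by simp

namespace IsNested

variable {μ : ℕ → ℕ} {k : ℕ} {c : Fin k → ℕ × ℕ}

lemma le_nestedLMax (hμ : IsPartition μ) (hc : IsNested μ c) :
    ∑ b, LWeight μ (c b) ≤ nestedLMax μ k :=
  le_csSup (nestedLMax_bddAbove hμ k) ⟨c, hc, rfl⟩

lemma lt_of_row_lt (hc : IsNested μ c) {x y : Fin k} (h : (c x).1 < (c y).1) : y < x := by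
  by_contra! hxy
  rcases hxy.eq_or_lt with rfl | hxy
  · exact h.false
  · exact (hc.2 x y hxy).1.asymm h

lemma row_injective (hc : IsNested μ c) : Function.Injective fun b => (c b).1 := by
  intro x y h
  by_contra hne
  rcases lt_or_gt_of_ne hne with hxy | hxy
  · exact (hc.2 x y hxy).1.ne' h
  · exact (hc.2 y x hxy).1.ne h

lemma col_add_le (hc : IsNested μ c) (a : Fin k) {t : ℕ}
    (hocc : ∀ r, (c a).1 ≤ r → r < t → ∃ b, (c b).1 = r) :
    ∀ s, (c a).1 + s < t → ∀ b, (c b).1 = (c a).1 + s → (c b).2 + s ≤ (c a).2 := by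
  intro s
  induction s with
  | zero =>
    intro _ b hb
    rw [hc.row_injective hb]
    exact le_rfl
  | succ s ih =>
    intro hst b hb
    obtain ⟨b', hb'⟩ := hocc ((c a).1 + s) (Nat.le_add_right _ _) (by omega)
    have hbb' : b < b' := hc.lt_of_row_lt (by omega)
    have := (hc.2 b b' hbb').2
    have := ih (by omega) b' hb'
    omega

theorem exists_heavier_of_not_salient (hc : IsNested μ c) (a : Fin k)
    (ha : ¬ Salient μ (c a).1) :
    ∃ c' : Fin k → ℕ × ℕ, IsNested μ c' ∧ ∑ b, LWeight μ (c b) < ∑ b, LWeight μ (c' b) := by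
  classical
  set i := (c a).1
  set rows := Finset.univ.image fun b => (c b).1
  have hgrow : ∀ r, i < r → μ i + i < μ r + r := fun r hr => by
    by_contra h
    exact ha ⟨r, hr, by omega⟩
  obtain ⟨t, hit, htfree, hocc⟩ :=
    exists_first_gap_after rows (Finset.mem_image_of_mem _ (Finset.mem_univ a))
  have hIco : Finset.Ico i t ⊆ rows := fun r hr => by
    rw [Finset.mem_Ico] at hr
    exact hocc r hr.1 hr.2
  simp only [rows, Finset.mem_image, Finset.mem_univ, true_and, not_exists] at htfree hocc
  set c' : Fin k → ℕ × ℕ := fun b => (rowShift i t (c b).1, (c b).2)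
  have hcell : ∀ b, Cell μ (c' b).1 (c' b).2 := by
    intro b
    by_cases hb : i ≤ (c b).1 ∧ (c b).1 < t
    · have := hc.col_add_le a hocc ((c b).1 - i) (by omega) b (by omega)
      have := hgrow ((c b).1 + 1) (by omega)
      have : (c a).2 ≤ μ i := (hc.1 a).2.2
      obtain ⟨-, h2, -⟩ := hc.1 b
      simp only [c', rowShift, if_pos hb]
      exact ⟨by omega, h2, by omega⟩
    · simpa [c', rowShift, hb] using hc.1 b
  have hc' : IsNested μ c' := ⟨hcell, fun x y hxy =>
    ⟨rowShift_lt_rowShift (hc.2 x y hxy).1 (htfree x), (hc.2 x y hxy).2⟩⟩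
  have hgain : ∑ b, ((LWeight μ (c' b) : ℤ) - LWeight μ (c b)) = (μ t + t) - (μ i + i) := by
    rw [← sum_rowShift_sub hit.le hIco fun r => (μ r + r : ℤ),
      Finset.sum_image fun x _ y _ h => hc.row_injective h]
    refine Finset.sum_congr rfl fun b _ => ?_
    rw [LWeight_eq_of_cell (hcell b), LWeight_eq_of_cell (hc.1 b)]
    ring
  refine ⟨c', hc', ?_⟩
  have := hgrow t hit
  rw [Finset.sum_sub_distrib] at hgain
  zify
  linarith

end IsNested

theorem max_nested_corners_salient (μ : ℕ → ℕ) (hμ : IsPartition μ)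
    (k : ℕ) (c : Fin k → ℕ × ℕ) (hc : IsNested μ c)
    (hw : ∑ a, LWeight μ (c a) = nestedLMax μ k) :
    ∀ a : Fin k, Salient μ (c a).1 := by
  intro a
  by_contra ha
  obtain ⟨c', hc', hlt⟩ := hc.exists_heavier_of_not_salient a ha
  exact (hw ▸ hlt).not_ge (hc'.le_nestedLMax hμ)
end

section
/- If partitions μ and ν of the same positive integer n are rook equivalent, then μ and ν have the same staircase rank. -/
/-!
Placing `k` non-attacking rooks on a Ferrers board is possible exactly when `k` is at most the
staircase rank. Given such a placement and a row `i ≤ k`, at most `i - 1` rooks lie in the rows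
above `i`, and the rooks in rows `i, i + 1, …` occupy distinct columns among the first `μ i`; so
`k ≤ (i - 1) + μ i`. Conversely, the staircase condition lets the rooks sit on the antidiagonal
`(i, k + 1 - i)`. Hence the staircase rank is determined by which rook numbers vanish.
-/

lemma IsPartition.antitone {μ : ℕ → ℕ} (hμ : IsPartition μ) {a b : ℕ} (ha : 1 ≤ a)
    (hab : a ≤ b) : μ b ≤ μ a := by
  induction b, hab using Nat.le_induction with
  | base => rfl
  | succ m ham ih => exact (hμ.2.1 m (ha.trans ham)).trans ih

lemma IsPartition.finite_board {μ : ℕ → ℕ} (hμ : IsPartition μ) : (Board μ).Finite := by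
  refine (hμ.2.2.biUnion fun i _ => (Set.finite_Icc 1 (μ i)).image (Prod.mk i)).subset ?_
  rintro ⟨i, j⟩ ⟨hi, hj, hjμ : j ≤ μ i⟩
  exact Set.mem_biUnion (show μ i ≠ 0 by omega) ⟨j, ⟨hj, hjμ⟩, rfl⟩

def IsRookPlacement (μ : ℕ → ℕ) (s : Finset (ℕ × ℕ)) : Prop :=
  (∀ p ∈ s, Cell μ p.1 p.2) ∧ ∀ p ∈ s, ∀ q ∈ s, p ≠ q → p.1 ≠ q.1 ∧ p.2 ≠ q.2

lemma rookCount_eq_ncard (μ : ℕ → ℕ) (k : ℕ) :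
    rookCount μ k = {s : Finset (ℕ × ℕ) | s.card = k ∧ IsRookPlacement μ s}.ncard :=
  rfl

lemma finite_setOf_isRookPlacement {μ : ℕ → ℕ} (hμ : IsPartition μ) :
    {s : Finset (ℕ × ℕ) | IsRookPlacement μ s}.Finite := by
  refine (hμ.finite_board.toFinset.powerset.finite_toSet).subset fun s hs => ?_
  rw [Finset.mem_coe, Finset.mem_powerset]
  exact fun p hp => hμ.finite_board.mem_toFinset.mpr (hs.1 p hp)

lemma IsRookPlacement.card_le {μ : ℕ → ℕ} (hμ : IsPartition μ) {s : Finset (ℕ × ℕ)}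
    (hs : IsRookPlacement μ s) {i : ℕ} (hi : 1 ≤ i) : s.card ≤ (i - 1) + μ i := by
  obtain ⟨hcell, hdist⟩ := hs
  have hbelow : (s.filter fun p => ¬ i ≤ p.1).card ≤ i - 1 := by
    simpa using Finset.card_le_card_of_injOn Prod.fst (t := Finset.Ico 1 i)
      (fun p hp => by
        have hp := Finset.mem_filter.mp hp
        have := (hcell p hp.1).1
        simp only [Finset.coe_Ico, Set.mem_Ico]
        omega)
      (fun p hp q hq hpq => by_contra fun hne =>
        (hdist p (Finset.mem_filter.mp hp).1 q (Finset.mem_filter.mp hq).1 hne).1 hpq)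
  have habove : (s.filter fun p => i ≤ p.1).card ≤ μ i := by
    simpa using Finset.card_le_card_of_injOn Prod.snd (t := Finset.Icc 1 (μ i))
      (fun p hp => by
        have hp := Finset.mem_filter.mp hp
        obtain ⟨-, hj, hjμ⟩ := hcell p hp.1
        have := hμ.antitone hi hp.2
        simp only [Finset.coe_Icc, Set.mem_Icc]
        omega)
      (fun p hp q hq hpq => by_contra fun hne =>
        (hdist p (Finset.mem_filter.mp hp).1 q (Finset.mem_filter.mp hq).1 hne).2 hpq)
  have := Finset.card_filter_add_card_filter_not (s := s) (fun p => i ≤ p.1)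
  omega

lemma isRookPlacement_antidiagonal {μ : ℕ → ℕ} {k : ℕ}
    (h : ∀ i, 1 ≤ i → i ≤ k → k + 1 ≤ μ i + i) :
    IsRookPlacement μ ((Finset.Icc 1 k).image fun i => (i, k + 1 - i)) := by
  refine ⟨fun p hp => ?_, fun p hp q hq hne => ?_⟩
  · obtain ⟨i, hi, rfl⟩ := Finset.mem_image.mp hp
    rw [Finset.mem_Icc] at hi
    have := h i hi.1 hi.2
    exact ⟨hi.1, by omega, by simp only; omega⟩
  · obtain ⟨i, hi, rfl⟩ := Finset.mem_image.mp hp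
    obtain ⟨j, hj, rfl⟩ := Finset.mem_image.mp hq
    rw [Finset.mem_Icc] at hi hj
    have hij : i ≠ j := fun hij => hne (by rw [hij])
    exact ⟨hij, by simp only; omega⟩

lemma rookCount_ne_zero_iff {μ : ℕ → ℕ} (hμ : IsPartition μ) (k : ℕ) :
    rookCount μ k ≠ 0 ↔ ∀ i, 1 ≤ i → i ≤ k → k + 1 ≤ μ i + i := by
  rw [rookCount_eq_ncard]
  constructor
  · intro hk i hi _
    obtain ⟨s, rfl, hs⟩ := Set.nonempty_of_ncard_ne_zero hk
    have := hs.card_le hμ hi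
    omega
  · intro h
    refine Set.ncard_ne_zero_of_mem ⟨?_, isRookPlacement_antidiagonal h⟩
      ((finite_setOf_isRookPlacement hμ).subset fun s hs => hs.2)
    rw [Finset.card_image_of_injective _ fun a b hab => congrArg Prod.fst hab, Nat.card_Icc]
    omega

theorem rook_equiv_same_staircase_rank_general (μ ν : ℕ → ℕ)
    (hμ : IsPartition μ) (hν : IsPartition ν)
    (h : RookEquiv μ ν) :
    staircaseRank μ = staircaseRank ν := by
  unfold staircaseRank
  congr 1
  ext k
  exact (rookCount_ne_zero_iff hμ k).symm.trans (h k ▸ rookCount_ne_zero_iff hν k)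

theorem rook_equiv_same_staircase_rank (n : ℕ) (hn : 1 ≤ n) (μ ν : ℕ → ℕ)
    (hμ : IsPartition μ) (hν : IsPartition ν)
    (hμn : pweight μ = n) (hνn : pweight ν = n)
    (h : RookEquiv μ ν) :
    staircaseRank μ = staircaseRank ν :=
  rook_equiv_same_staircase_rank_general μ ν hμ hν h
end
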